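/- Let n ≥ 1. For every k ≥ 0, the operator Jq^k, regarded as a ℚ₂-linear endomorphism of ℚ₂[ξ₁,…,ξₙ], belongs to the ℚ₂-subalgebra of the algebra of ℚ₂-linear endomorphisms of ℚ₂[ξ₁,…,ξₙ] generated by Jq¹ and Jq². -/

import Mathlib

open MvPolynomial

/-- Total dyadic Steenrod square with a formal variable `t` recording the degree shift:
`ξᵢ ↦ ξᵢ + ξᵢ²·t`.  For a homogeneous `f` of degree `d`, the coefficient of `t^k`
is exactly the homogeneous component of degree `d + k` of the image of `f` under the
algebra endomorphism `ξᵢ ↦ ξᵢ + ξᵢ²`. -/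
noncomputable def JqT (R : Type) [CommRing R] (n : ℕ) :
    MvPolynomial (Fin n) R →ₐ[R] Polynomial (MvPolynomial (Fin n) R) :=
  aeval fun i : Fin n => Polynomial.C (X i) + Polynomial.C (X i ^ 2) * Polynomial.X

/-- The `k`-th (dyadic, for `R = ℤ_[2]`) Steenrod square `Jq^k`, as an `R`-linear
endomorphism of `R[ξ₁,…,ξₙ]`: it sends a homogeneous polynomial of degree `d` to the
homogeneous component of degree `d + k` of its image under the algebra endomorphism
`ξᵢ ↦ ξᵢ + ξᵢ²`. -/
noncomputable def Jq (R : Type) [CommRing R] (n : ℕ) (k : ℕ) :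
    MvPolynomial (Fin n) R →ₗ[R] MvPolynomial (Fin n) R :=
  (LinearMap.restrictScalars R (Polynomial.lcoeff (MvPolynomial (Fin n) R) k)).comp
    (JqT R n).toLinearMap

/-! Let `W_m` be the derivation `ξᵢ ↦ ξᵢ^(m+2)` of the Witt algebra. Differentiating the total
square `ξᵢ ↦ ξᵢ + ξᵢ² t` in `t` gives `∂ₜ Jq = (∑ₐ (-2t)ᵃ W_a) ∘ Jq`, i.e.
`(k+1) Jq^(k+1) = ∑_{a+b=k} (-2)ᵃ W_a Jq^b`. For `k = 0, 1` this gives `W₀ = Jq¹` and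
`-2 W₁ = 2 Jq² - Jq¹ Jq¹`, the bracket `[W₀, W_m] = m W_(m+1)` then produces every `W_m`, and
the same recursion produces every `Jq^k`; only the divisions by `2`, `m` and `k + 1` need
characteristic zero. -/

section Witt

variable (R : Type) [CommRing R] (σ : Type*)

noncomputable def wittDerivation (m : ℕ) : Derivation R (MvPolynomial σ R) (MvPolynomial σ R) :=
  mkDerivation R fun i => X i ^ (m + 2)

variable {R σ}

theorem wittDerivation_X (m : ℕ) (i : σ) : wittDerivation R σ m (X i) = X i ^ (m + 2) :=
  mkDerivation_X _ _ _

theorem wittDerivation_mul_X (m : ℕ) (p : MvPolynomial σ R) (i : σ) :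
    wittDerivation R σ m (p * X i) = wittDerivation R σ m p * X i + p * X i ^ (m + 2) := by
  rw [Derivation.leibniz, wittDerivation_X, smul_eq_mul, smul_eq_mul]; ring

theorem wittDerivation_mul_X_sq (m : ℕ) (p : MvPolynomial σ R) (i : σ) :
    wittDerivation R σ m (p * X i ^ 2) =
      wittDerivation R σ m p * X i ^ 2 + 2 * p * X i ^ (m + 3) := by
  rw [sq, ← mul_assoc, wittDerivation_mul_X, wittDerivation_mul_X]; ring

theorem wittDerivation_zero_lie (m : ℕ) :
    ⁅wittDerivation R σ 0, wittDerivation R σ m⁆ = m • wittDerivation R σ (m + 1) := by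
  refine derivation_ext fun i => ?_
  rw [Derivation.commutator_apply, wittDerivation_X, wittDerivation_X, Derivation.leibniz_pow,
    Derivation.leibniz_pow, Derivation.smul_apply, wittDerivation_X, wittDerivation_X,
    wittDerivation_X]
  simp only [smul_eq_mul, nsmul_eq_mul]
  push_cast
  ring

end Witt

section CommRing

variable {R : Type} [CommRing R] {n : ℕ}

open Finset

theorem Jq_apply (k : ℕ) (f : MvPolynomial (Fin n) R) : Jq R n k f = (JqT R n f).coeff k := rfl

theorem JqT_X (i : Fin n) :
    JqT R n (X i) = Polynomial.C (X i) + Polynomial.C (X i ^ 2) * Polynomial.X :=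
  aeval_X _ i

theorem Jq_zero : Jq R n 0 = 1 := by
  have h : Polynomial.constantCoeff.comp (JqT R n).toRingHom = RingHom.id _ :=
    ringHom_ext (fun a => by simp [JqT]) (fun i => by simp [JqT])
  exact LinearMap.ext fun f => RingHom.congr_fun h f

theorem Jq_succ_C (k : ℕ) (a : R) : Jq R n (k + 1) (C a) = 0 := by
  simp [Jq_apply, JqT]

theorem Jq_succ_mul_X (k : ℕ) (p : MvPolynomial (Fin n) R) (i : Fin n) :
    Jq R n (k + 1) (p * X i) = Jq R n (k + 1) p * X i + Jq R n k p * X i ^ 2 := by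
  simp [Jq_apply, JqT_X, mul_add, ← mul_assoc, Polynomial.coeff_mul_C, -map_pow]

theorem sum_wittDerivation_Jq_mul_X (k : ℕ) (p : MvPolynomial (Fin n) R) (i : Fin n) :
    ∑ x ∈ antidiagonal (k + 1), (-2 : R) ^ x.1 • wittDerivation R _ x.1 (Jq R n x.2 (p * X i)) =
      X i * ∑ x ∈ antidiagonal (k + 1), (-2 : R) ^ x.1 • wittDerivation R _ x.1 (Jq R n x.2 p) +
      X i ^ 2 * ∑ x ∈ antidiagonal k, (-2 : R) ^ x.1 • wittDerivation R _ x.1 (Jq R n x.2 p) +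
      X i ^ 2 * Jq R n (k + 1) p := by
  have hterm : ∀ x ∈ antidiagonal k,
      (-2 : R) ^ x.1 • wittDerivation R _ x.1 (Jq R n (x.2 + 1) (p * X i)) =
        X i * (-2 : R) ^ x.1 • wittDerivation R _ x.1 (Jq R n (x.2 + 1) p) +
        X i ^ 2 * (-2 : R) ^ x.1 • wittDerivation R _ x.1 (Jq R n x.2 p) +
        ((-2) ^ x.1 * X i ^ (x.1 + 2) * Jq R n (x.2 + 1) p -
          (-2) ^ (x.1 + 1) * X i ^ (x.1 + 1 + 2) * Jq R n x.2 p) := by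
    intro x _
    rw [Jq_succ_mul_X, map_add, wittDerivation_mul_X, wittDerivation_mul_X_sq]
    simp only [smul_eq_C_mul, map_pow, map_neg, map_ofNat]
    ring
  -- both sides are `∑_{a+b=k+1} (-2)ᵃ ξᵢ^(a+2) Jq^b p`, with its term `b = 0` resp. `a = 0`
  -- split off
  have htelescope :
      (-2) ^ (k + 1) * X i ^ (k + 1 + 2) * p +
        ∑ x ∈ antidiagonal k,
          (-2 : MvPolynomial (Fin n) R) ^ x.1 * X i ^ (x.1 + 2) * Jq R n (x.2 + 1) p =
      X i ^ 2 * Jq R n (k + 1) p +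
        ∑ x ∈ antidiagonal k, (-2) ^ (x.1 + 1) * X i ^ (x.1 + 1 + 2) * Jq R n x.2 p := by
    have h := (Nat.sum_antidiagonal_succ' (n := k) (f := fun x : ℕ × ℕ =>
      (-2 : MvPolynomial (Fin n) R) ^ x.1 * X i ^ (x.1 + 2) * Jq R n x.2 p)).symm.trans
      Nat.sum_antidiagonal_succ
    simpa [Jq_zero] using h
  rw [Nat.sum_antidiagonal_succ', Nat.sum_antidiagonal_succ', sum_congr rfl hterm,
    sum_add_distrib, sum_add_distrib, sum_sub_distrib, ← mul_sum, ← mul_sum]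
  simp only [Jq_zero, Module.End.one_apply, wittDerivation_mul_X, smul_eq_C_mul, map_pow, map_neg,
    map_ofNat]
  linear_combination htelescope

theorem succ_nsmul_Jq_apply (k : ℕ) (f : MvPolynomial (Fin n) R) :
    (k + 1) • Jq R n (k + 1) f =
      ∑ x ∈ antidiagonal k, (-2 : R) ^ x.1 • wittDerivation R _ x.1 (Jq R n x.2 f) := by
  induction f using MvPolynomial.induction_on generalizing k with
  | C a =>
    rw [Jq_succ_C, smul_zero]
    refine (sum_eq_zero fun x _ => ?_).symm
    rcases x with ⟨m, _ | b⟩ <;> simp [Jq_zero, Jq_succ_C]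
  | add p q hp hq => simp only [map_add, smul_add, hp, hq, sum_add_distrib]
  | mul_X p i hp =>
    rcases k with _ | k
    · have h0 := hp 0
      simp only [zero_add, one_smul, Nat.antidiagonal_zero, sum_singleton, pow_zero, Jq_zero,
        Module.End.one_apply] at h0 ⊢
      rw [Jq_succ_mul_X, wittDerivation_mul_X, h0, Jq_zero, Module.End.one_apply]
    · rw [sum_wittDerivation_Jq_mul_X, Jq_succ_mul_X, ← hp, ← hp]
      simp only [nsmul_eq_mul]
      push_cast
      ring

theorem succ_nsmul_Jq (k : ℕ) :
    (k + 1) • Jq R n (k + 1) = ∑ x ∈ antidiagonal k,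
      (-2 : R) ^ x.1 • ((wittDerivation R (Fin n) x.1 : Module.End R _) * Jq R n x.2) :=
  LinearMap.ext fun f => by
    simpa only [LinearMap.smul_apply, LinearMap.sum_apply, Module.End.mul_apply,
      Derivation.coeFn_coe]
      using succ_nsmul_Jq_apply k f

theorem wittDerivation_zero_eq_Jq_one :
    (wittDerivation R (Fin n) 0 : Module.End R _) = Jq R n 1 := by
  simpa [Jq_zero] using (succ_nsmul_Jq (R := R) (n := n) 0).symm

theorem neg_two_smul_wittDerivation_one :
    (-2 : R) • (wittDerivation R (Fin n) 1 : Module.End R _) =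
      2 • Jq R n 2 - Jq R n 1 * Jq R n 1 := by
  have h := succ_nsmul_Jq (R := R) (n := n) 1
  rw [Nat.sum_antidiagonal_succ', Nat.antidiagonal_zero, sum_singleton] at h
  simp only [zero_add, pow_one, pow_zero, one_smul, Jq_zero, mul_one, wittDerivation_zero_eq_Jq_one,
    one_add_one_eq_two] at h
  exact eq_sub_of_add_eq h.symm

end CommRing

section CharZero

variable {R : Type} [Field R] [CharZero R] {σ : Type*}

theorem wittDerivation_mem_of_mem {A : Subalgebra R (Module.End R (MvPolynomial σ R))}
    (h0 : (wittDerivation R σ 0 : Module.End R _) ∈ A)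
    (h1 : (wittDerivation R σ 1 : Module.End R _) ∈ A) (m : ℕ) :
    (wittDerivation R σ m : Module.End R _) ∈ A := by
  rcases m.eq_zero_or_pos with rfl | hm
  · exact h0
  induction m, hm using Nat.le_induction with
  | base => exact h1
  | succ m hm ih =>
    have hlie := congrArg (fun D : Derivation R (MvPolynomial σ R) (MvPolynomial σ R) =>
      (D : Module.End R (MvPolynomial σ R))) (wittDerivation_zero_lie m)
    simp only [Derivation.commutator_coe_linear_map, Ring.lie_def,
      Derivation.coe_smul_linearMap] at hlie
    have hmem : (m : R) • (wittDerivation R σ (m + 1) : Module.End R _) ∈ A := by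
      rw [Nat.cast_smul_eq_nsmul, ← hlie]
      exact sub_mem (mul_mem h0 ih) (mul_mem ih h0)
    have hm0 : (m : R) ≠ 0 := Nat.cast_ne_zero.mpr (by omega)
    simpa [hm0] using A.smul_mem hmem (m : R)⁻¹

theorem Jq_mem_adjoin_Jq_one_Jq_two (n k : ℕ) :
    Jq R n k ∈ Algebra.adjoin R {Jq R n 1, Jq R n 2} := by
  set A := Algebra.adjoin R {Jq R n 1, Jq R n 2}
  have hJq1 : Jq R n 1 ∈ A := Algebra.subset_adjoin (Set.mem_insert _ _)
  have hJq2 : Jq R n 2 ∈ A := Algebra.subset_adjoin (Set.mem_insert_of_mem _ rfl)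
  have hW0 : (wittDerivation R (Fin n) 0 : Module.End R _) ∈ A :=
    wittDerivation_zero_eq_Jq_one (R := R) ▸ hJq1
  have hW1 : (wittDerivation R (Fin n) 1 : Module.End R _) ∈ A := by
    have h := A.smul_mem (sub_mem (nsmul_mem hJq2 2) (mul_mem hJq1 hJq1)) (-2 : R)⁻¹
    rwa [← neg_two_smul_wittDerivation_one, inv_smul_smul₀ (by norm_num)] at h
  induction k using Nat.strong_induction_on with
  | _ k ih =>
    rcases k with _ | k
    · exact Jq_zero (R := R) ▸ A.one_mem
    have hsum : (k + 1) • Jq R n (k + 1) ∈ A := by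
      rw [succ_nsmul_Jq]
      refine A.sum_mem fun x hx => A.smul_mem (mul_mem (wittDerivation_mem_of_mem hW0 hW1 _) ?_) _
      exact ih x.2 (Finset.Nat.antidiagonal.snd_lt hx)
    rw [← Nat.cast_smul_eq_nsmul R] at hsum
    simpa [Nat.cast_add_one_ne_zero] using A.smul_mem hsum (k + 1 : R)⁻¹

end CharZero

theorem jq_mem_adjoin_jq1_jq2_general (n : ℕ) (k : ℕ) :
    (Jq ℚ_[2] n k : Module.End ℚ_[2] (MvPolynomial (Fin n) ℚ_[2])) ∈
      Algebra.adjoin ℚ_[2]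
        ({Jq ℚ_[2] n 1, Jq ℚ_[2] n 2} :
          Set (Module.End ℚ_[2] (MvPolynomial (Fin n) ℚ_[2]))) :=
  Jq_mem_adjoin_Jq_one_Jq_two n k

/-- As a `ℚ₂`-algebra of linear endomorphisms, the dyadic Steenrod algebra is generated
by `Jq¹` and `Jq²`: every `Jq^k` lies in the `ℚ₂`-subalgebra of `End(ℚ₂[ξ₁,…,ξₙ])`
generated by `Jq¹` and `Jq²`. -/
theorem jq_mem_adjoin_jq1_jq2 (n : ℕ) (hn : 1 ≤ n) (k : ℕ) :
    (Jq ℚ_[2] n k : Module.End ℚ_[2] (MvPolynomial (Fin n) ℚ_[2])) ∈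
      Algebra.adjoin ℚ_[2]
        ({Jq ℚ_[2] n 1, Jq ℚ_[2] n 2} :
          Set (Module.End ℚ_[2] (MvPolynomial (Fin n) ℚ_[2]))) :=
  jq_mem_adjoin_jq1_jq2_general n k
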